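/- Let G be a connected undirected graph with positive edge weights, x₀, x₁ vertices, V₁ = {u : d^ω(u,x₀) > d^ω(u,x₁)}. Then the subgraph induced by V₁ is connected (possibly empty). -/
import Mathlib


open SimpleGraph

/-- The weight of a walk: the sum of the weights of its edges. -/
noncomputable def walkWeight {V : Type} (w : V → V → ℝ) {G : SimpleGraph V}
    {u v : V} (p : G.Walk u v) : ℝ :=
  (p.darts.map fun d => w d.toProd.1 d.toProd.2).sum

/-- The shortest-path (minimum-weight walk) distance. -/
noncomputable def dw {V : Type} (w : V → V → ℝ) (G : SimpleGraph V) (u v : V) : ℝ :=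
  sInf {x | ∃ p : G.Walk u v, walkWeight w p = x}

section Aux

variable {V : Type} [Fintype V] {G : SimpleGraph V} {w : V → V → ℝ}

lemma walkWeight_nil (w : V → V → ℝ) (u : V) :
    walkWeight w (Walk.nil : G.Walk u u) = 0 := by simp [walkWeight]

lemma walkWeight_cons (w : V → V → ℝ) {u v x : V} (h : G.Adj u v) (p : G.Walk v x) :
    walkWeight w (Walk.cons h p) = w u v + walkWeight w p := by
  simp [walkWeight]

lemma walkWeight_nonneg (hpos : ∀ u v, G.Adj u v → 0 < w u v) {u v : V} (p : G.Walk u v) :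
    0 ≤ walkWeight w p := by
  induction p with
  | nil => simp [walkWeight_nil]
  | cons h q ih =>
      rw [walkWeight_cons]
      have := hpos _ _ h
      linarith

lemma dw_set_nonempty (hconn : G.Connected) (u v : V) :
    {x | ∃ p : G.Walk u v, walkWeight w p = x}.Nonempty := by
  obtain ⟨p⟩ := hconn u v
  exact ⟨walkWeight w p, p, rfl⟩

lemma dw_set_bddBelow (hpos : ∀ u v, G.Adj u v → 0 < w u v) (u v : V) :
    BddBelow {x | ∃ p : G.Walk u v, walkWeight w p = x} := by
  refine ⟨0, ?_⟩
  rintro x ⟨p, rfl⟩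
  exact walkWeight_nonneg hpos p

lemma walkWeight_append (w : V → V → ℝ) {u v x : V} (p : G.Walk u v) (q : G.Walk v x) :
    walkWeight w (p.append q) = walkWeight w p + walkWeight w q := by
  simp [walkWeight]

lemma dw_le_weight (hpos : ∀ u v, G.Adj u v → 0 < w u v) {u v : V} (p : G.Walk u v) :
    dw w G u v ≤ walkWeight w p :=
  csInf_le (dw_set_bddBelow hpos u v) ⟨p, rfl⟩

lemma dw_le_weight_add (hpos : ∀ u v, G.Adj u v → 0 < w u v) (hconn : G.Connected)
    {u v : V} (p : G.Walk u v) (x : V) :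
    dw w G u x ≤ walkWeight w p + dw w G v x := by
  have : dw w G u x - walkWeight w p ≤ dw w G v x := by
    apply le_csInf (dw_set_nonempty hconn v x)
    rintro y ⟨q, rfl⟩
    have := dw_le_weight hpos (p.append q)
    rw [walkWeight_append] at this
    linarith
  linarith

lemma dw_nonneg (hpos : ∀ u v, G.Adj u v → 0 < w u v) (hconn : G.Connected) (u v : V) :
    0 ≤ dw w G u v :=
  le_csInf (dw_set_nonempty hconn u v) (by rintro x ⟨p, rfl⟩; exact walkWeight_nonneg hpos p)

lemma dw_self (hpos : ∀ u v, G.Adj u v → 0 < w u v) (hconn : G.Connected) (u : V) :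
    dw w G u u = 0 :=
  le_antisymm (by simpa [walkWeight_nil] using dw_le_weight hpos (Walk.nil : G.Walk u u))
    (dw_nonneg hpos hconn u u)

/-- triangle-type inequality across one edge -/
lemma dw_le_adj (hpos : ∀ u v, G.Adj u v → 0 < w u v) (hconn : G.Connected)
    {u v : V} (h : G.Adj u v) (x : V) :
    dw w G u x ≤ w u v + dw w G v x := by
  have : dw w G u x - w u v ≤ dw w G v x := by
    apply le_csInf (dw_set_nonempty hconn v x)
    rintro y ⟨q, rfl⟩
    have := dw_le_weight hpos (Walk.cons h q)
    rw [walkWeight_cons] at this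
    linarith
  linarith

/-- positive lower bound for distances between distinct vertices -/
lemma dw_pos (hpos : ∀ u v, G.Adj u v → 0 < w u v) (hconn : G.Connected)
    {u v : V} (hne : u ≠ v) : 0 < dw w G u v := by
  classical
  -- the finset of all weights of adjacent pairs
  set F : Finset ℝ :=
    ((Finset.univ ×ˢ Finset.univ).filter (fun p : V × V => G.Adj p.1 p.2)).image
      (fun p => w p.1 p.2) with hF
  have hFne : F.Nonempty := by
    obtain ⟨p⟩ := hconn u v
    cases p with
    | nil => exact absurd rfl hne
    | @cons _ b _ h q =>
        refine ⟨w u b, ?_⟩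
        rw [hF]
        exact Finset.mem_image.2 ⟨(u, b), Finset.mem_filter.2 ⟨by simp, h⟩, rfl⟩
  have hFpos : 0 < F.min' hFne := by
    obtain ⟨p, hp, hw⟩ := Finset.mem_image.1 (F.min'_mem hFne)
    rw [← hw]
    exact hpos _ _ (Finset.mem_filter.1 hp).2
  refine lt_of_lt_of_le hFpos ?_
  apply le_csInf (dw_set_nonempty hconn u v)
  rintro y ⟨p, rfl⟩
  cases p with
  | nil => exact absurd rfl hne
  | @cons _ b _ h q =>
      rw [walkWeight_cons]
      have h1 : F.min' hFne ≤ w u b :=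
        Finset.min'_le _ _ (Finset.mem_image.2 ⟨(u, b), Finset.mem_filter.2 ⟨by simp, h⟩, rfl⟩)
      have h2 := walkWeight_nonneg hpos q
      linarith

end Aux

/-- The label-1 class of the landmark bipartition induces a connected
(possibly empty) subgraph, i.e. it is preconnected. -/
theorem stmt_1 {V : Type} [Fintype V] (G : SimpleGraph V) (w : V → V → ℝ)
    (hsymm : ∀ u v, w u v = w v u) (hpos : ∀ u v, G.Adj u v → 0 < w u v)
    (hconn : G.Connected) (x₀ x₁ : V) :
    (G.induce {u | dw w G u x₁ < dw w G u x₀}).Preconnected := by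
  set S : Set V := {u | dw w G u x₁ < dw w G u x₀} with hS
  rintro ⟨u, hu⟩ ⟨v, hv⟩
  have hu' : dw w G u x₁ < dw w G u x₀ := hu
  have hne : x₁ ≠ x₀ := by
    rintro rfl
    exact lt_irrefl _ hu'
  have hx₁ : x₁ ∈ S := by
    show dw w G x₁ x₁ < dw w G x₁ x₀
    rw [dw_self hpos hconn]
    exact dw_pos hpos hconn hne
  -- key claim: any vertex at the start of a cheap walk lies in S and reaches the
  -- endpoint inside the induced graph
  have key : ∀ (a b : V) (p : G.Walk a b),
      walkWeight w p + dw w G b x₁ < dw w G a x₀ →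
      ∃ ha : a ∈ S, ∀ hb : b ∈ S, (G.induce S).Reachable ⟨a, ha⟩ ⟨b, hb⟩ := by
    intro a b p
    induction p with
    | nil =>
        rename_i a0
        intro hlt
        rw [walkWeight_nil] at hlt
        have ha : a0 ∈ S := by
          show dw w G a0 x₁ < dw w G a0 x₀
          linarith
        exact ⟨ha, fun hb' => Reachable.refl _⟩
    | @cons a c b h q ih =>
        intro hlt
        rw [walkWeight_cons] at hlt
        have hq : walkWeight w q + dw w G b x₁ < dw w G c x₀ := by
          have := dw_le_adj (w := w) hpos hconn h x₀
          linarith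
        obtain ⟨hc, hreach⟩ := ih hq
        have ha : a ∈ S := by
          show dw w G a x₁ < dw w G a x₀
          have h1 : dw w G a x₁ ≤ walkWeight w (Walk.cons h q) + dw w G b x₁ :=
            dw_le_weight_add hpos hconn _ x₁
          rw [walkWeight_cons] at h1
          linarith
        refine ⟨ha, fun hb' => ?_⟩
        have hadj : (G.induce S).Adj ⟨a, ha⟩ ⟨c, hc⟩ := h
        exact (hadj.reachable).trans (hreach hb')
  -- every vertex of S reaches x₁ inside the induced graph
  have step : ∀ (a : V) (ha : a ∈ S), (G.induce S).Reachable ⟨a, ha⟩ ⟨x₁, hx₁⟩ := by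
    intro a ha
    have hlt : dw w G a x₁ < dw w G a x₀ := ha
    obtain ⟨y, ⟨p, rfl⟩, hy⟩ :=
      exists_lt_of_csInf_lt (dw_set_nonempty hconn a x₁) hlt
    have hp : walkWeight w p + dw w G x₁ x₁ < dw w G a x₀ := by
      rw [dw_self hpos hconn]; linarith
    obtain ⟨ha', f⟩ := key a x₁ p hp
    exact f hx₁
  exact (step u hu).trans (step v hv).symm
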